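/- Discrete J-difference formula (analogue of Lemma on $J[u]-J[u']$ for ML-POSC): in the discrete-time finite-state setting, let $u$ and $u'$ be two control sequences with induced state distributions $p_t$ and $p'_t$ (both starting from the same $p_0$), and let $w'_t$ be the value function of $u'$ (backward recursion with terminal condition $g$). Define the discrete Hamiltonian $\mathcal{H}(t,s,u,w) = f(t,s,u) + \sum_{s'}P_u(s,s')w(s') - w(s)$. Then $J[u]-J[u'] = \sum_{t=0}^{T-dt} \sum_s p_t(s)\big(\mathcal{H}(t,s,u_t,w'_{t+dt}) - \mathcal{H}(t,s,u'_t,w'_{t+dt})\big)$. -/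

import Mathlib

/-!
Pairing the distribution `p_t` of `u` with any `w` satisfying `w_N = g` and telescoping in time
gives `J[u] = ⟨p_0, w_0⟩ + ∑_t ⟨p_t, f(u_t) + P_{u_t} w_{t+1} - w_t⟩`. Taking `w = w'`, the
residuals vanish for `u'` by the Bellman recursion, so `J[u'] = ⟨p_0, w'_0⟩`; for `u` the same
recursion rewrites `w'_t` as `f(u'_t) + P_{u'_t} w'_{t+1}`, which is the difference of the two
Hamiltonians (their `- w(s)` terms cancel).
-/

open Finset

/-- Forward state distribution at time `t` induced by `p0` and the controls `u`. -/
def pF {S U : Type} [Fintype S] (P : U → S → S → ℝ) (p0 : S → ℝ)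
    (u : ℕ → U) : ℕ → S → ℝ
  | 0 => p0
  | (t+1) => fun s' => ∑ s : S, pF P p0 u t s * P (u t) s s'

/-- Backward value function, indexed by the number `k` of remaining steps. -/
def wAux {S U : Type} [Fintype S] (P : U → S → S → ℝ)
    (f : ℕ → S → U → ℝ) (g : S → ℝ) (N : ℕ) (u : ℕ → U) : ℕ → S → ℝ
  | 0 => g
  | (k+1) => fun s =>
      f (N - (k+1)) s (u (N - (k+1)))
        + ∑ s' : S, P (u (N - (k+1))) s s' * wAux P f g N u k s'

/-- Backward value function at time `t`, with `w_N = g`. -/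
def wVal {S U : Type} [Fintype S] (P : U → S → S → ℝ)
    (f : ℕ → S → U → ℝ) (g : S → ℝ) (N : ℕ) (u : ℕ → U) (t : ℕ) : S → ℝ :=
  wAux P f g N u (N - t)

/-- Total expected cost. -/
def Jval {S U : Type} [Fintype S] (P : U → S → S → ℝ) (p0 : S → ℝ)
    (f : ℕ → S → U → ℝ) (g : S → ℝ) (N : ℕ) (u : ℕ → U) : ℝ :=
  (∑ t ∈ Finset.range N, ∑ s : S, pF P p0 u t s * f t s (u t))
    + ∑ s : S, pF P p0 u N s * g s

/-- Discrete Hamiltonian `H(t,s,u,w) = f(t,s,u) + ∑ s' P_u(s,s') w(s') - w(s)`. -/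
def Hd {S U : Type} [Fintype S] (P : U → S → S → ℝ) (f : ℕ → S → U → ℝ)
    (t : ℕ) (s : S) (v : U) (w : S → ℝ) : ℝ :=
  f t s v + (∑ s' : S, P v s s' * w s') - w s

section

variable {S U : Type} [Fintype S] (P : U → S → S → ℝ)

theorem wVal_self (f : ℕ → S → U → ℝ) (g : S → ℝ) (N : ℕ) (u : ℕ → U) :
    wVal P f g N u N = g := by
  simp [wVal, wAux]

theorem wVal_of_lt (f : ℕ → S → U → ℝ) (g : S → ℝ) {N t : ℕ} (u : ℕ → U) (ht : t < N) (s : S) :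
    wVal P f g N u t s
      = f t s (u t) + ∑ s' : S, P (u t) s s' * wVal P f g N u (t + 1) s' := by
  obtain ⟨k, rfl⟩ := Nat.exists_eq_add_of_lt ht
  simp only [wVal, show t + k + 1 - t = k + 1 by omega, wAux,
    show t + k + 1 - (k + 1) = t by omega, show t + k + 1 - (t + 1) = k by omega]

variable (p0 : S → ℝ) (u : ℕ → U)

theorem sum_pF_succ_mul (t : ℕ) (w : S → ℝ) :
    ∑ s' : S, pF P p0 u (t + 1) s' * w s'
      = ∑ s : S, pF P p0 u t s * ∑ s' : S, P (u t) s s' * w s' := by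
  simp only [pF, sum_mul, mul_sum, mul_assoc]
  exact sum_comm

theorem sum_pF_mul_eq_add_sum_range (w : ℕ → S → ℝ) (N : ℕ) :
    ∑ s : S, pF P p0 u N s * w N s
      = ∑ s : S, p0 s * w 0 s
        + ∑ t ∈ range N, ∑ s : S, pF P p0 u t s *
            ((∑ s' : S, P (u t) s s' * w (t + 1) s') - w t s) := by
  induction N with
  | zero => simp [pF]
  | succ N ih =>
    rw [sum_range_succ, ← add_assoc, ← ih, sum_pF_succ_mul, ← sum_add_distrib]
    exact sum_congr rfl fun s _ => by ring

theorem Jval_eq_add_sum_residual (f : ℕ → S → U → ℝ) (g : S → ℝ) (N : ℕ)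
    (w : ℕ → S → ℝ) (hw : w N = g) :
    Jval P p0 f g N u
      = ∑ s : S, p0 s * w 0 s
        + ∑ t ∈ range N, ∑ s : S, pF P p0 u t s *
            (f t s (u t) + (∑ s' : S, P (u t) s s' * w (t + 1) s') - w t s) := by
  rw [Jval, ← hw, sum_pF_mul_eq_add_sum_range, add_comm, add_assoc, ← sum_add_distrib]
  congr 1
  refine sum_congr rfl fun t _ => ?_
  rw [← sum_add_distrib]
  exact sum_congr rfl fun s _ => by ring

theorem Jval_eq_sum_mul_wVal_zero (f : ℕ → S → U → ℝ) (g : S → ℝ) (N : ℕ) :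
    Jval P p0 f g N u = ∑ s : S, p0 s * wVal P f g N u 0 s := by
  rw [Jval_eq_add_sum_residual P p0 u f g N _ (wVal_self P f g N u), add_eq_left]
  refine sum_eq_zero fun t ht => sum_eq_zero fun s _ => ?_
  rw [wVal_of_lt P f g u (mem_range.1 ht)]
  ring

end

theorem discrete_J_difference_formula_general
    {S U : Type} [Fintype S]
    (P : U → S → S → ℝ)
    (p0 : S → ℝ)
    (f : ℕ → S → U → ℝ) (g : S → ℝ) (N : ℕ)
    (u u' : ℕ → U) :
    Jval P p0 f g N u - Jval P p0 f g N u'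
      = ∑ t ∈ Finset.range N, ∑ s : S, pF P p0 u t s *
          (Hd P f t s (u t) (wVal P f g N u' (t+1))
            - Hd P f t s (u' t) (wVal P f g N u' (t+1))) := by
  rw [Jval_eq_add_sum_residual P p0 u f g N _ (wVal_self P f g N u'),
    Jval_eq_sum_mul_wVal_zero, add_sub_cancel_left]
  refine sum_congr rfl fun t ht => sum_congr rfl fun s _ => ?_
  rw [wVal_of_lt P f g u' (mem_range.1 ht), Hd, Hd]
  ring

theorem discrete_J_difference_formula
    {S U : Type} [Fintype S]
    (P : U → S → S → ℝ)
    (hPnonneg : ∀ u s s', 0 ≤ P u s s')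
    (hPsum : ∀ u s, ∑ s' : S, P u s s' = 1)
    (p0 : S → ℝ) (hp0nonneg : ∀ s, 0 ≤ p0 s) (hp0sum : ∑ s : S, p0 s = 1)
    (f : ℕ → S → U → ℝ) (g : S → ℝ) (N : ℕ)
    (u u' : ℕ → U) :
    Jval P p0 f g N u - Jval P p0 f g N u'
      = ∑ t ∈ Finset.range N, ∑ s : S, pF P p0 u t s *
          (Hd P f t s (u t) (wVal P f g N u' (t+1))
            - Hd P f t s (u' t) (wVal P f g N u' (t+1))) :=
  discrete_J_difference_formula_general P p0 f g N u u'
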